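/- The number of edges of the Fibonacci cube Γ_n equals Σ_{i=1}^{n} F_i * F_{n-i+1}, where F is the Fibonacci sequence with F_1 = F_2 = 1. -/

import Mathlib

/-- Independent subsets of the h-th power of the path on n vertices:
subsets of {1,...,n} with all pairwise differences of distinct elements greater than h. -/
def pathSubsets (n h : ℕ) : Finset (Finset ℕ) :=
  (Finset.Icc 1 n).powerset.filter (fun S => ∀ i ∈ S, ∀ j ∈ S, i < j → i + h < j)

def pathCount (n h k : ℕ) : ℕ := ((pathSubsets n h).filter (fun S => S.card = k)).card

def pathTotal (n h : ℕ) : ℕ := (pathSubsets n h).card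

/-- Independent subsets of the h-th power of the cycle on n vertices:
subsets S of {1,...,n} with h < |i-j| < n-h for all distinct i,j ∈ S. -/
def cycleSubsets (n h : ℕ) : Finset (Finset ℕ) :=
  (Finset.Icc 1 n).powerset.filter
    (fun S => ∀ i ∈ S, ∀ j ∈ S, i < j → i + h < j ∧ j + h < n + i)

def cycleCount (n h k : ℕ) : ℕ := ((cycleSubsets n h).filter (fun S => S.card = k)).card

def cycleTotal (n h : ℕ) : ℕ := (cycleSubsets n h).card

/-- Number of edges of the Hasse diagram of independent subsets of Pₙ⁽ʰ⁾ ordered by inclusion. -/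
def pathEdges (n h : ℕ) : ℕ :=
  (((pathSubsets n h) ×ˢ (pathSubsets n h)).filter
    (fun p => p.1 ⊆ p.2 ∧ p.2.card = p.1.card + 1)).card

/-- Number of edges of the Hasse diagram of independent subsets of Cₙ⁽ʰ⁾ ordered by inclusion. -/
def cycleEdges (n h : ℕ) : ℕ :=
  (((cycleSubsets n h) ×ˢ (cycleSubsets n h)).filter
    (fun p => p.1 ⊆ p.2 ∧ p.2.card = p.1.card + 1)).card

/-!
An edge of the Hasse diagram is a pair `(T.erase x, T)` with `x ∈ T`, and independence is
hereditary, so the number of edges is `∑ |T|` over independent sets `T`. An independent set of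
`{1, …, n + h + 1}` either avoids `n + h + 1` or is `insert (n + h + 1) S` with `S` independent in
`{1, …, n}`. For `h = 1` this gives `F (n + 2)` independent sets and the edge recurrence
`E (n + 2) = E (n + 1) + E n + F (n + 2)`, which the convolution `∑_{i + j = n + 1} F i * F j`
also satisfies, with the same initial values.
-/

open Finset

section PathSubsets

variable {n h : ℕ} {S T : Finset ℕ}

lemma mem_pathSubsets :
    S ∈ pathSubsets n h ↔ S ⊆ Icc 1 n ∧ ∀ i ∈ S, ∀ j ∈ S, i < j → i + h < j := by
  simp [pathSubsets]

lemma mem_pathSubsets_of_subset (hT : T ∈ pathSubsets n h) (hST : S ⊆ T) :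
    S ∈ pathSubsets n h := by
  rw [mem_pathSubsets] at hT ⊢
  exact ⟨hST.trans hT.1, fun i hi j hj => hT.2 i (hST hi) j (hST hj)⟩

lemma le_of_mem_pathSubsets (hS : S ∈ pathSubsets n h) {x : ℕ} (hx : x ∈ S) : x ≤ n :=
  (mem_Icc.1 ((mem_pathSubsets.1 hS).1 hx)).2

lemma notMem_pathSubsets_of_lt (hS : S ∈ pathSubsets n h) {x : ℕ} (hx : n < x) : x ∉ S :=
  fun hm => (le_of_mem_pathSubsets hS hm).not_gt hx

lemma filter_notMem_pathSubsets_succ :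
    (pathSubsets (n + 1) h).filter (n + 1 ∉ ·) = pathSubsets n h := by
  ext S
  simp only [mem_filter, mem_pathSubsets, subset_iff, mem_Icc]
  constructor
  · rintro ⟨⟨hIcc, hsep⟩, htop⟩
    refine ⟨fun x hx => ?_, hsep⟩
    have := hIcc hx
    have : x ≠ n + 1 := fun e => htop (e ▸ hx)
    omega
  · rintro ⟨hIcc, hsep⟩
    refine ⟨⟨fun x hx => ?_, hsep⟩, fun hx => ?_⟩ <;> have := hIcc ‹_› <;> omega

lemma insert_mem_pathSubsets_add_succ (hS : S ∈ pathSubsets n h) :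
    insert (n + h + 1) S ∈ pathSubsets (n + h + 1) h := by
  have hle := fun x (hx : x ∈ S) => le_of_mem_pathSubsets hS hx
  rw [mem_pathSubsets] at hS ⊢
  refine ⟨insert_subset (by simp) (hS.1.trans (Icc_subset_Icc_right (by omega))), ?_⟩
  simp only [mem_insert]
  rintro i (rfl | hi) j (rfl | hj) hij
  · omega
  · have := hle j hj; omega
  · have := hle i hi; omega
  · exact hS.2 i hi j hj hij

lemma erase_mem_pathSubsets_add_succ (hT : T ∈ pathSubsets (n + h + 1) h)
    (htop : n + h + 1 ∈ T) : T.erase (n + h + 1) ∈ pathSubsets n h := by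
  have hle := fun x (hx : x ∈ T) => le_of_mem_pathSubsets hT hx
  rw [mem_pathSubsets] at hT ⊢
  refine ⟨fun x hx => ?_, fun i hi j hj => hT.2 i (mem_of_mem_erase hi) j (mem_of_mem_erase hj)⟩
  obtain ⟨hne, hx⟩ := mem_erase.1 hx
  have hsep := hT.2 x hx _ htop (by have := hle x hx; omega)
  have := (mem_Icc.1 (hT.1 hx)).1
  simp only [mem_Icc]
  omega

lemma filter_mem_pathSubsets_add_succ :
    (pathSubsets (n + h + 1) h).filter (n + h + 1 ∈ ·) =
      (pathSubsets n h).image (insert (n + h + 1)) := by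
  ext T
  simp only [mem_filter, mem_image]
  constructor
  · rintro ⟨hT, htop⟩
    exact ⟨_, erase_mem_pathSubsets_add_succ hT htop, insert_erase htop⟩
  · rintro ⟨S, hS, rfl⟩
    exact ⟨insert_mem_pathSubsets_add_succ hS, mem_insert_self _ _⟩

lemma sum_pathSubsets_add_succ {M : Type*} [AddCommMonoid M] (f : Finset ℕ → M) :
    ∑ S ∈ pathSubsets (n + h + 1) h, f S =
      ∑ S ∈ pathSubsets (n + h) h, f S + ∑ S ∈ pathSubsets n h, f (insert (n + h + 1) S) := by
  rw [← sum_filter_add_sum_filter_not _ (n + h + 1 ∈ ·), filter_notMem_pathSubsets_succ,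
    filter_mem_pathSubsets_add_succ, sum_image, add_comm]
  intro S hS S' hS' e
  rw [← erase_insert (notMem_pathSubsets_of_lt hS (by omega : n < n + h + 1)),
    ← erase_insert (notMem_pathSubsets_of_lt hS' (by omega : n < n + h + 1))]
  exact congrArg (erase · _) e

end PathSubsets

lemma Finset.card_filter_powerset_card_eq_add_one {α : Type*} (T : Finset α) :
    #{S ∈ T.powerset | T.card = S.card + 1} = T.card := by
  rcases hT : T.card with _ | k
  · simp
  · calc _ = #(powersetCard k T) := by
          simp only [powersetCard_eq_filter, Nat.add_right_cancel_iff, eq_comm]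
      _ = k + 1 := by rw [card_powersetCard, hT, Nat.choose_succ_self_right]

section Counting

variable {n h : ℕ}

lemma pathTotal_add_succ : pathTotal (n + h + 1) h = pathTotal (n + h) h + pathTotal n h := by
  simp only [pathTotal, card_eq_sum_ones]
  exact sum_pathSubsets_add_succ _

lemma pathEdges_eq_sum_card : pathEdges n h = ∑ T ∈ pathSubsets n h, T.card := by
  rw [pathEdges, card_filter, sum_product_right]
  refine sum_congr rfl fun T hT => ?_
  calc _ = #{S ∈ T.powerset | T.card = S.card + 1} := by
        rw [← card_filter]
        congr 1
        ext S
        simp only [mem_filter, mem_powerset]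
        exact ⟨fun ⟨_, hST, hc⟩ => ⟨hST, hc⟩,
          fun ⟨hST, hc⟩ => ⟨mem_pathSubsets_of_subset hT hST, hST, hc⟩⟩
    _ = T.card := card_filter_powerset_card_eq_add_one T

lemma pathEdges_add_succ :
    pathEdges (n + h + 1) h = pathEdges (n + h) h + pathEdges n h + pathTotal n h := by
  have hins : ∀ S ∈ pathSubsets n h, #(insert (n + h + 1) S) = #S + 1 :=
    fun S hS => card_insert_of_notMem (notMem_pathSubsets_of_lt hS (by omega))
  rw [pathEdges_eq_sum_card, pathEdges_eq_sum_card, pathEdges_eq_sum_card, pathTotal,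
    card_eq_sum_ones, sum_pathSubsets_add_succ, sum_congr rfl hins, sum_add_distrib, add_assoc]

end Counting

lemma pathTotal_one_eq_fib : ∀ n, pathTotal n 1 = Nat.fib (n + 2)
  | 0 => by decide
  | 1 => by decide
  | n + 2 => by
    rw [pathTotal_add_succ, pathTotal_one_eq_fib n, pathTotal_one_eq_fib (n + 1),
      Nat.fib_add_two (n := n + 2)]
    ring

open Nat in
lemma sum_antidiagonal_fib_mul_fib_add_two (m : ℕ) :
    ∑ p ∈ antidiagonal (m + 2), fib p.1 * fib p.2 =
      ∑ p ∈ antidiagonal (m + 1), fib p.1 * fib p.2 + ∑ p ∈ antidiagonal m, fib p.1 * fib p.2 +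
        fib (m + 1) := by
  simp only [Nat.sum_antidiagonal_succ (n := m + 1), Nat.sum_antidiagonal_succ (n := m), fib_zero,
    fib_one, fib_add_two, zero_mul, zero_add, one_mul, add_mul, sum_add_distrib]
  ring

lemma pathEdges_one_eq_sum_antidiagonal :
    ∀ n, pathEdges n 1 = ∑ p ∈ antidiagonal (n + 1), Nat.fib p.1 * Nat.fib p.2
  | 0 => by decide
  | 1 => by decide
  | n + 2 => by
    rw [pathEdges_add_succ, pathTotal_one_eq_fib, pathEdges_one_eq_sum_antidiagonal n,
      pathEdges_one_eq_sum_antidiagonal (n + 1),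
      sum_antidiagonal_fib_mul_fib_add_two (n + 1)]

open Nat in
lemma sum_antidiagonal_fib_mul_fib_eq_sum_Icc (n : ℕ) :
    ∑ p ∈ antidiagonal (n + 1), fib p.1 * fib p.2 = ∑ i ∈ Icc 1 n, fib i * fib (n - i + 1) := by
  rw [Nat.sum_antidiagonal_eq_sum_range_succ (fun i j => fib i * fib j), range_succ_eq_Icc_zero]
  symm
  refine sum_subset_zero_on_sdiff (Icc_subset_Icc (zero_le 1) (le_succ n)) ?_ ?_
  · intro i hi
    obtain rfl | rfl : i = 0 ∨ i = n + 1 := by simp only [mem_sdiff, mem_Icc] at hi; omega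
    all_goals simp
  · intro i hi
    rw [mem_Icc] at hi
    rw [show n + 1 - i = n - i + 1 by omega]

lemma eq_fib_add_one_of_fib_rec {F : ℕ → ℕ} (hF1 : F 1 = 1) (hF2 : F 2 = 1)
    (hFrec : ∀ i, 2 < i → F i = F (i - 1) + F (i - 2)) : ∀ i, F (i + 1) = Nat.fib (i + 1)
  | 0 => hF1
  | 1 => hF2
  | i + 2 => by
    rw [hFrec (i + 3) (by omega), show i + 3 - 1 = i + 1 + 1 from rfl,
      show i + 3 - 2 = i + 1 from rfl, eq_fib_add_one_of_fib_rec hF1 hF2 hFrec i,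
      eq_fib_add_one_of_fib_rec hF1 hF2 hFrec (i + 1)]
    exact (Nat.fib_add_two.trans (add_comm _ _)).symm

theorem stmt12 (n : ℕ) (F : ℕ → ℕ) (hF1 : F 1 = 1) (hF2 : F 2 = 1)
    (hFrec : ∀ i, 2 < i → F i = F (i - 1) + F (i - 2)) :
    pathEdges n 1 = ∑ i ∈ Finset.Icc 1 n, F i * F (n - i + 1) := by
  rw [pathEdges_one_eq_sum_antidiagonal, sum_antidiagonal_fib_mul_fib_eq_sum_Icc]
  refine sum_congr rfl fun i hi => ?_
  obtain ⟨k, rfl⟩ : ∃ k, i = k + 1 := ⟨i - 1, by rw [mem_Icc] at hi; omega⟩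
  rw [eq_fib_add_one_of_fib_rec hF1 hF2 hFrec k, eq_fib_add_one_of_fib_rec hF1 hF2 hFrec]
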